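/- arXiv:1611.10001 — 2 statements merged into one kernel-verified Lean document; each statement's English description precedes it below -/
import Mathlib

section
/- Assume E_1 ≠ {0}. Then λ_1 = inf { ‖v‖^2 : (u, v) is a compatible pair with Re⟪u, v⟫ = 1 }. (In particular the set on the right is nonempty and bounded below by λ_1, and the infimum is attained at a suitably normalized element of E_1.) -/
/-!
Expanding along the orthogonal decomposition `H = ⨁ E k`, a compatible pair `(u, v)` has
`Re⟪u, v⟫ = ∑_{k ≥ 1} λ_k ‖P_k u‖²` and `‖v‖² = ∑_{k ≥ 1} λ_k² ‖P_k u‖²`, so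
`λ_1 Re⟪u, v⟫ ≤ ‖v‖²` term by term since `λ_k ≥ λ_1 > 0`. Equality is attained by `v = λ_1 u`
for any `u ∈ E 1` with `‖u‖² = λ_1⁻¹`.
-/

open scoped InnerProductSpace

section

variable {𝕜 H : Type*} [RCLike 𝕜] [NormedAddCommGroup H] [InnerProductSpace 𝕜 H]

theorem re_inner_ofReal_smul_self (a : ℝ) (x : H) :
    RCLike.re ⟪x, (a : 𝕜) • x⟫_𝕜 = a * ‖x‖ ^ 2 := by
  rw [inner_smul_right, RCLike.re_ofReal_mul, inner_self_eq_norm_sq]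

theorem norm_ofReal_smul_sq (a : ℝ) (x : H) : ‖(a : 𝕜) • x‖ ^ 2 = a ^ 2 * ‖x‖ ^ 2 := by
  rw [norm_smul, RCLike.norm_ofReal, mul_pow, sq_abs]

theorem Submodule.exists_mem_norm_eq (K : Submodule 𝕜 H) (hK : K ≠ ⊥) {r : ℝ} (hr : 0 ≤ r) :
    ∃ u ∈ K, ‖u‖ = r := by
  obtain ⟨e, he, he0⟩ := K.ne_bot_iff.mp hK
  refine ⟨((r / ‖e‖ : ℝ) : 𝕜) • e, K.smul_mem _ he, ?_⟩
  rw [norm_smul, RCLike.norm_ofReal, abs_of_nonneg (by positivity),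
    div_mul_cancel₀ _ (norm_ne_zero_iff.mpr he0)]

theorem Submodule.starProjection_eq_of_mem_of_sub_mem_orthogonal (K : Submodule 𝕜 H)
    [K.HasOrthogonalProjection] (P : H →L[𝕜] H) (hmem : ∀ x, P x ∈ K)
    (horth : ∀ x, x - P x ∈ Kᗮ) : P = K.starProjection :=
  ContinuousLinearMap.ext fun x => (eq_starProjection_of_mem_orthogonal (hmem x) (horth x)).symm

theorem inner_starProjection_starProjection (K : Submodule 𝕜 H) [K.HasOrthogonalProjection]
    (u v : H) : ⟪K.starProjection u, K.starProjection v⟫_𝕜 = ⟪u, K.starProjection v⟫_𝕜 := by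
  rw [K.inner_starProjection_left_eq_right]
  exact congrArg _ (K.starProjection_eq_self_iff.mpr (K.orthogonalProjectionOnto v).2)

section HilbertSum

variable {ι : Type*} [CompleteSpace H] {E : ι → Submodule 𝕜 H} [∀ i, CompleteSpace (E i)]

theorem OrthogonalFamily.hasSum_starProjection
    (hE : OrthogonalFamily 𝕜 (fun i => E i) fun i => (E i).subtypeₗᵢ)
    (hdense : ⊤ ≤ (⨆ i, E i).topologicalClosure) (x : H) :
    HasSum (fun i => (E i).starProjection x) x := by
  classical
  have hsum := IsHilbertSum.mkInternal E hE hdense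
  set w := hsum.linearIsometryEquiv x
  have hw : HasSum (fun i => (w i : H)) x := by
    simpa only [w, LinearIsometryEquiv.symm_apply_apply, Submodule.coe_subtypeₗᵢ,
      Submodule.coe_subtype] using hsum.hasSum_linearIsometryEquiv_symm w
  have hproj : ∀ j, (E j).starProjection x = w j := by
    intro j
    refine ((E j).starProjection.hasSum hw).unique ?_
    convert hasSum_ite_eq j (w j : H) using 2 with i
    split_ifs with hij
    · subst hij
      exact (E i).starProjection_eq_self_iff.mpr (w i).2
    · exact (E j).starProjection_apply_eq_zero_iff.mpr ((hE.isOrtho hij).le (w i).2)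
  simpa only [hproj] using hw

theorem OrthogonalFamily.hasSum_inner_starProjection
    (hE : OrthogonalFamily 𝕜 (fun i => E i) fun i => (E i).subtypeₗᵢ)
    (hdense : ⊤ ≤ (⨆ i, E i).topologicalClosure) (u v : H) :
    HasSum (fun i => ⟪(E i).starProjection u, (E i).starProjection v⟫_𝕜) ⟪u, v⟫_𝕜 := by
  simpa only [innerSL_apply_apply, inner_starProjection_starProjection] using
    (innerSL 𝕜 u).hasSum (hE.hasSum_starProjection hdense v)

theorem OrthogonalFamily.hasSum_norm_sq_starProjection
    (hE : OrthogonalFamily 𝕜 (fun i => E i) fun i => (E i).subtypeₗᵢ)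
    (hdense : ⊤ ≤ (⨆ i, E i).topologicalClosure) (v : H) :
    HasSum (fun i => ‖(E i).starProjection v‖ ^ 2) (‖v‖ ^ 2) := by
  simpa only [RCLike.reCLM_apply, inner_self_eq_norm_sq] using
    RCLike.reCLM.hasSum (hE.hasSum_inner_starProjection hdense v v)

end HilbertSum

def IsCompatiblePair (E : ℕ → Submodule 𝕜 H) [∀ k, CompleteSpace (E k)] (lam : ℕ → ℝ)
    (u v : H) : Prop :=
  (E 0).starProjection v = 0 ∧
    ∀ k, 1 ≤ k → (E k).starProjection v = (lam k : 𝕜) • (E k).starProjection u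

section Compatible

variable {E : ℕ → Submodule 𝕜 H} [∀ k, CompleteSpace (E k)] {lam : ℕ → ℝ}

theorem IsCompatiblePair.mul_re_inner_le_norm_sq [CompleteSpace H]
    (hE : OrthogonalFamily 𝕜 (fun k => E k) fun k => (E k).subtypeₗᵢ)
    (hdense : ⊤ ≤ (⨆ k, E k).topologicalClosure) {c : ℝ} (hc : 0 ≤ c)
    (hlam : ∀ k, 1 ≤ k → c ≤ lam k) {u v : H} (h : IsCompatiblePair E lam u v) :
    c * RCLike.re ⟪u, v⟫_𝕜 ≤ ‖v‖ ^ 2 := by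
  have htermwise : ∀ k, c * RCLike.re ⟪(E k).starProjection u, (E k).starProjection v⟫_𝕜
      ≤ ‖(E k).starProjection v‖ ^ 2 := by
    intro k
    rcases Nat.eq_zero_or_pos k with rfl | hk
    · simp [h.1]
    · rw [h.2 k hk, re_inner_ofReal_smul_self, norm_ofReal_smul_sq]
      have hlamk : c * lam k ≤ lam k ^ 2 := by
        rw [sq]
        exact mul_le_mul_of_nonneg_right (hlam k hk) (hc.trans (hlam k hk))
      rw [← mul_assoc]
      exact mul_le_mul_of_nonneg_right hlamk (sq_nonneg _)
  exact hasSum_le htermwise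
    ((RCLike.reCLM.hasSum (hE.hasSum_inner_starProjection hdense u v)).mul_left c)
    (hE.hasSum_norm_sq_starProjection hdense v)

theorem isCompatiblePair_ofReal_smul_of_mem_one
    (hE : OrthogonalFamily 𝕜 (fun k => E k) fun k => (E k).subtypeₗᵢ) {u : H} (hu : u ∈ E 1) :
    IsCompatiblePair E lam u ((lam 1 : 𝕜) • u) := by
  have hzero : ∀ k, k ≠ 1 → (E k).starProjection u = 0 := fun k hk =>
    (E k).starProjection_apply_eq_zero_iff.mpr ((hE.isOrtho (Ne.symm hk)).le hu)
  refine ⟨by rw [map_smul, hzero 0 zero_ne_one, smul_zero], fun k hk => ?_⟩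
  rcases hk.eq_or_lt with rfl | hk
  · rw [map_smul, (E 1).starProjection_eq_self_iff.mpr hu]
  · rw [map_smul, hzero k hk.ne', smul_zero, smul_zero]

theorem isLeast_norm_sq_isCompatiblePair [CompleteSpace H]
    (hE : OrthogonalFamily 𝕜 (fun k => E k) fun k => (E k).subtypeₗᵢ)
    (hdense : ⊤ ≤ (⨆ k, E k).topologicalClosure) (hlam₁ : 0 < lam 1)
    (hlam : ∀ k, 1 ≤ k → lam 1 ≤ lam k) (hE₁ : E 1 ≠ ⊥) :
    IsLeast {x : ℝ | ∃ u v : H, IsCompatiblePair E lam u v ∧ RCLike.re ⟪u, v⟫_𝕜 = 1 ∧ x = ‖v‖ ^ 2}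
      (lam 1) := by
  refine ⟨?_, ?_⟩
  · obtain ⟨u, hu, hnorm⟩ := (E 1).exists_mem_norm_eq hE₁ (Real.sqrt_nonneg (lam 1)⁻¹)
    have hu2 : ‖u‖ ^ 2 = (lam 1)⁻¹ := by
      rw [hnorm, Real.sq_sqrt (inv_nonneg.mpr hlam₁.le)]
    refine ⟨u, (lam 1 : 𝕜) • u, isCompatiblePair_ofReal_smul_of_mem_one hE hu, ?_, ?_⟩
    · rw [re_inner_ofReal_smul_self, hu2, mul_inv_cancel₀ hlam₁.ne']
    · rw [norm_ofReal_smul_sq, hu2]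
      field_simp
  · rintro x ⟨u, v, huv, hre, rfl⟩
    simpa [hre] using huv.mul_re_inner_le_norm_sq hE hdense hlam₁.le hlam

end Compatible

end

theorem firstEigenvalue_variational_sup_norm_sq_general
    {H : Type*} [NormedAddCommGroup H] [InnerProductSpace ℂ H] [CompleteSpace H]
    (E : ℕ → Submodule ℂ H)
    (hEclosed : ∀ k, IsClosed (E k : Set H))
    (hEorth : ∀ j k, j ≠ k → ∀ x ∈ E j, ∀ y ∈ E k, (inner ℂ x y : ℂ) = 0)
    (hEdense : (⨆ k, E k : Submodule ℂ H).topologicalClosure = ⊤)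
    (P : ℕ → H →L[ℂ] H)
    (hPmem : ∀ k x, P k x ∈ E k)
    (hPorth : ∀ k x, x - P k x ∈ (E k)ᗮ)
    (lam : ℕ → ℝ)
    (hlampos : ∀ k, 1 ≤ k → 0 < lam k)
    (hlammono : ∀ j k, 1 ≤ j → j < k → lam j < lam k)
    (hE1 : E 1 ≠ ⊥) :
    (({x : ℝ | ∃ u v : H, (P 0 v = 0 ∧ ∀ k, 1 ≤ k → P k v = ((lam k : ℂ)) • P k u) ∧
        (inner ℂ u v : ℂ).re = 1 ∧ x = ‖v‖^2}).Nonempty)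
    ∧ (∀ x ∈ {x : ℝ | ∃ u v : H, (P 0 v = 0 ∧ ∀ k, 1 ≤ k → P k v = ((lam k : ℂ)) • P k u) ∧
        (inner ℂ u v : ℂ).re = 1 ∧ x = ‖v‖^2}, lam 1 ≤ x)
    ∧ lam 1 = sInf {x : ℝ | ∃ u v : H, (P 0 v = 0 ∧ ∀ k, 1 ≤ k → P k v = ((lam k : ℂ)) • P k u) ∧
        (inner ℂ u v : ℂ).re = 1 ∧ x = ‖v‖^2}
    ∧ lam 1 ∈ {x : ℝ | ∃ u v : H, (P 0 v = 0 ∧ ∀ k, 1 ≤ k → P k v = ((lam k : ℂ)) • P k u) ∧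
        (inner ℂ u v : ℂ).re = 1 ∧ x = ‖v‖^2} := by
  have : ∀ k, CompleteSpace (E k) := fun k => (hEclosed k).completeSpace_coe
  have hE : OrthogonalFamily ℂ (fun k => E k) fun k => (E k).subtypeₗᵢ :=
    fun j k hjk x y => hEorth j k hjk x x.2 y y.2
  obtain rfl : P = fun k => (E k).starProjection := funext fun k =>
    (E k).starProjection_eq_of_mem_of_sub_mem_orthogonal (P k) (hPmem k) (hPorth k)
  have hlam : ∀ k, 1 ≤ k → lam 1 ≤ lam k := fun k hk =>
    hk.eq_or_lt.elim (fun h => h ▸ le_rfl) fun h => (hlammono 1 k le_rfl h).le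
  have hleast := isLeast_norm_sq_isCompatiblePair hE hEdense.ge (hlampos 1 le_rfl) hlam hE1
  exact ⟨⟨_, hleast.1⟩, hleast.2, hleast.csInf_eq.symm, hleast.1⟩

/-- Abstract form of Corollary 3.2 (first part) of Li–Lin–Son:
with the setup of mutually orthogonal closed subspaces `E k` with dense span,
orthogonal projections `P k`, and positive eigenvalues `lam k` (`k ≥ 1`) strictly
increasing to infinity, if `E 1 ≠ 0` then
`lam 1 = inf { ‖v‖² : (u, v) compatible, Re⟪u, v⟫ = 1 }`; moreover the set is
nonempty, bounded below by `lam 1`, and the infimum is attained. -/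
theorem firstEigenvalue_variational_sup_norm_sq
    {H : Type*} [NormedAddCommGroup H] [InnerProductSpace ℂ H] [CompleteSpace H]
    (E : ℕ → Submodule ℂ H)
    (hEclosed : ∀ k, IsClosed (E k : Set H))
    (hEorth : ∀ j k, j ≠ k → ∀ x ∈ E j, ∀ y ∈ E k, (inner ℂ x y : ℂ) = 0)
    (hEdense : (⨆ k, E k : Submodule ℂ H).topologicalClosure = ⊤)
    (P : ℕ → H →L[ℂ] H)
    (hPmem : ∀ k x, P k x ∈ E k)
    (hPorth : ∀ k x, x - P k x ∈ (E k)ᗮ)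
    (lam : ℕ → ℝ)
    (hlampos : ∀ k, 1 ≤ k → 0 < lam k)
    (hlammono : ∀ j k, 1 ≤ j → j < k → lam j < lam k)
    (hlamtop : Filter.Tendsto lam Filter.atTop Filter.atTop)
    (hE1 : E 1 ≠ ⊥) :
    (({x : ℝ | ∃ u v : H, (P 0 v = 0 ∧ ∀ k, 1 ≤ k → P k v = ((lam k : ℂ)) • P k u) ∧
        (inner ℂ u v : ℂ).re = 1 ∧ x = ‖v‖^2}).Nonempty)
    ∧ (∀ x ∈ {x : ℝ | ∃ u v : H, (P 0 v = 0 ∧ ∀ k, 1 ≤ k → P k v = ((lam k : ℂ)) • P k u) ∧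
        (inner ℂ u v : ℂ).re = 1 ∧ x = ‖v‖^2}, lam 1 ≤ x)
    ∧ lam 1 = sInf {x : ℝ | ∃ u v : H, (P 0 v = 0 ∧ ∀ k, 1 ≤ k → P k v = ((lam k : ℂ)) • P k u) ∧
        (inner ℂ u v : ℂ).re = 1 ∧ x = ‖v‖^2}
    ∧ lam 1 ∈ {x : ℝ | ∃ u v : H, (P 0 v = 0 ∧ ∀ k, 1 ≤ k → P k v = ((lam k : ℂ)) • P k u) ∧
        (inner ℂ u v : ℂ).re = 1 ∧ x = ‖v‖^2} :=
  firstEigenvalue_variational_sup_norm_sq_general E hEclosed hEorth hEdense P hPmem hPorth lam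
    hlampos hlammono hE1
end

section
/- Let (u, v) be a compatible pair with v ≠ 0. If ‖v‖^2 = λ_1 · Re⟪u, v⟫, then P_k v = 0 for every k ≠ 1 and v ∈ E_1; that is, v is an eigenvector for the lowest positive eigenvalue λ_1. -/
/-!
Write `w = v - λ₁ u`. By Parseval, `Re⟪w, v⟫ = ∑ₖ Re⟪Pₖ w, Pₖ v⟫`, and the equality hypothesis says
that the left side vanishes. For `k ≥ 1` compatibility gives
`Re⟪Pₖ w, Pₖ v⟫ = (λₖ - λ₁) λₖ ‖Pₖ u‖² ≥ 0`, while the `k = 0` term is `0`. A sum of nonnegative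
terms vanishes only if every term does, so `Pₖ u = 0`, hence `Pₖ v = 0`, for all `k ≥ 2`
(where `λₖ > λ₁`). Thus `v = P₁ v ∈ E₁`.
-/

open scoped InnerProductSpace

open RCLike

namespace OrthogonalFamily

variable {𝕜 E ι : Type*} [RCLike 𝕜] [NormedAddCommGroup E] [InnerProductSpace 𝕜 E]
  {V : ι → Submodule 𝕜 E} [∀ i, CompleteSpace (V i)]

theorem starProjection_eq_zero_of_mem
    (hV : OrthogonalFamily 𝕜 (fun i => V i) fun i => (V i).subtypeₗᵢ) {i j : ι} (hij : i ≠ j)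
    {x : E} (hx : x ∈ V i) : (V j).starProjection x = 0 :=
  ((V j).starProjection_apply_eq_zero_iff).mpr (hV.isOrtho hij hx)

variable [CompleteSpace E]

theorem hasSum_starProjection_s5
    (hV : OrthogonalFamily 𝕜 (fun i => V i) fun i => (V i).subtypeₗᵢ)
    (hVtotal : ⊤ ≤ (⨆ i, V i).topologicalClosure) (x : E) :
    HasSum (fun i => (V i).starProjection x) x := by
  let hsum := IsHilbertSum.mkInternal _ hV hVtotal
  let f := hsum.linearIsometryEquiv x
  have hf : HasSum (fun i => (f i : E)) x := by
    simpa [f] using hsum.hasSum_linearIsometryEquiv_symm f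
  suffices h : ∀ j, (V j).starProjection x = f j by simpa only [h] using hf
  intro j
  refine (hf.mapL (V j).starProjection).unique ?_
  convert hasSum_single j fun i hij => hV.starProjection_eq_zero_of_mem hij (f i).2 using 1
  exact (Submodule.starProjection_eq_self_iff.mpr (f j).2).symm

theorem hasSum_inner_starProjection_s5
    (hV : OrthogonalFamily 𝕜 (fun i => V i) fun i => (V i).subtypeₗᵢ)
    (hVtotal : ⊤ ≤ (⨆ i, V i).topologicalClosure) (x y : E) :
    HasSum (fun i => ⟪(V i).starProjection x, (V i).starProjection y⟫_𝕜) ⟪x, y⟫_𝕜 := by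
  have h := (hV.hasSum_starProjection_s5 hVtotal y).mapL (innerSL 𝕜 x)
  simp only [innerSL_apply_apply] at h
  convert h using 2 with i
  rw [Submodule.inner_starProjection_left_eq_right,
    Submodule.starProjection_eq_self_iff.mpr ((V i).starProjection_apply_mem y)]

theorem re_inner_starProjection_eq_zero_of_nonneg
    (hV : OrthogonalFamily 𝕜 (fun i => V i) fun i => (V i).subtypeₗᵢ)
    (hVtotal : ⊤ ≤ (⨆ i, V i).topologicalClosure) {x y : E} (hxy : re ⟪x, y⟫_𝕜 = 0)
    (hnonneg : ∀ i, 0 ≤ re ⟪(V i).starProjection x, (V i).starProjection y⟫_𝕜) (i : ι) :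
    re ⟪(V i).starProjection x, (V i).starProjection y⟫_𝕜 = 0 := by
  have h := hasSum_re 𝕜 (hV.hasSum_inner_starProjection_s5 hVtotal x y)
  rw [hxy, hasSum_zero_iff_of_nonneg hnonneg] at h
  exact congrFun h i

theorem mem_of_starProjection_eq_zero
    (hV : OrthogonalFamily 𝕜 (fun i => V i) fun i => (V i).subtypeₗᵢ)
    (hVtotal : ⊤ ≤ (⨆ i, V i).topologicalClosure) {j : ι} {x : E}
    (hx : ∀ i, i ≠ j → (V i).starProjection x = 0) : x ∈ V j := by
  have h := (hasSum_single j hx).unique (hV.hasSum_starProjection_s5 hVtotal x)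
  exact (V j).starProjection_eq_self_iff.mp h

end OrthogonalFamily

section EigenComponent

variable {𝕜 F : Type*} [RCLike 𝕜] [NormedAddCommGroup F] [InnerProductSpace 𝕜 F]
  {x y : F} {μ ν : ℝ}

theorem re_inner_sub_smul_of_eq_smul (h : y = (μ : 𝕜) • x) :
    re ⟪y - (ν : 𝕜) • x, y⟫_𝕜 = (μ - ν) * μ * ‖x‖ ^ 2 := by
  rw [h, ← sub_smul, ← ofReal_sub, inner_smul_left, inner_smul_right, conj_ofReal, ← mul_assoc,
    ← ofReal_mul, re_ofReal_mul, inner_self_eq_norm_sq]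

theorem re_inner_sub_smul_nonneg_of_eq_smul (h : y = (μ : 𝕜) • x) (hμ : 0 ≤ μ) (hνμ : ν ≤ μ) :
    0 ≤ re ⟪y - (ν : 𝕜) • x, y⟫_𝕜 := by
  rw [re_inner_sub_smul_of_eq_smul h]
  have := sub_nonneg.mpr hνμ
  positivity

theorem eq_zero_of_re_inner_sub_smul_eq_zero (h : y = (μ : 𝕜) • x) (hμ : 0 < μ) (hνμ : ν < μ)
    (h0 : re ⟪y - (ν : 𝕜) • x, y⟫_𝕜 = 0) : y = 0 := by
  rw [re_inner_sub_smul_of_eq_smul h] at h0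
  have hx : ‖x‖ ^ 2 = 0 :=
    (mul_eq_zero.mp h0).resolve_left (mul_ne_zero (sub_ne_zero.mpr hνμ.ne') hμ.ne')
  rw [pow_eq_zero_iff two_ne_zero, norm_eq_zero] at hx
  rw [h, hx, smul_zero]

end EigenComponent

theorem compatible_pair_equality_case_first_eigenspace_general
    {H : Type*} [NormedAddCommGroup H] [InnerProductSpace ℂ H] [CompleteSpace H]
    (E : ℕ → Submodule ℂ H)
    (hEclosed : ∀ k, IsClosed (E k : Set H))
    (hEorth : ∀ j k, j ≠ k → ∀ x ∈ E j, ∀ y ∈ E k, (inner ℂ x y : ℂ) = 0)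
    (hEdense : (⨆ k, E k : Submodule ℂ H).topologicalClosure = ⊤)
    (P : ℕ → H →L[ℂ] H)
    (hPmem : ∀ k x, P k x ∈ E k)
    (hPorth : ∀ k x, x - P k x ∈ (E k)ᗮ)
    (lam : ℕ → ℝ)
    (hlampos : ∀ k, 1 ≤ k → 0 < lam k)
    (hlammono : ∀ j k, 1 ≤ j → j < k → lam j < lam k)
    (u v : H)
    (hcompat0 : P 0 v = 0)
    (hcompat : ∀ k, 1 ≤ k → P k v = ((lam k : ℂ)) • P k u)
    (heq : ‖v‖^2 = lam 1 * (inner ℂ u v : ℂ).re) :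
    (∀ k, k ≠ 1 → P k v = 0) ∧ v ∈ E 1 := by
  have : ∀ k, CompleteSpace (E k) := fun k => (hEclosed k).completeSpace_coe
  have hE : OrthogonalFamily ℂ (fun k => E k) fun k => (E k).subtypeₗᵢ :=
    fun j k hjk x y => hEorth j k hjk x x.2 y y.2
  obtain rfl : P = fun k => (E k).starProjection := funext fun k => ContinuousLinearMap.ext
    fun x => ((E k).eq_starProjection_of_mem_orthogonal (hPmem k x) (hPorth k x)).symm
  have hlam_one_le : ∀ k, 1 ≤ k → lam 1 ≤ lam k := fun k hk =>
    hk.eq_or_lt.elim (fun h => h ▸ le_rfl) fun h => (hlammono 1 k le_rfl h).le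
  have hwv : (⟪v - (lam 1 : ℂ) • u, v⟫_ℂ).re = 0 := by
    rw [inner_sub_left, Complex.sub_re, inner_smul_left, Complex.conj_ofReal,
      Complex.re_ofReal_mul, ← heq]
    exact sub_eq_zero_of_eq (inner_self_eq_norm_sq (𝕜 := ℂ) v)
  have hnonneg : ∀ k,
      0 ≤ re ⟪(E k).starProjection (v - (lam 1 : ℂ) • u), (E k).starProjection v⟫_ℂ := by
    rintro (_ | k)
    · simp [hcompat0]
    · rw [map_sub, map_smul]
      exact re_inner_sub_smul_nonneg_of_eq_smul (hcompat (k + 1) (by omega))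
        (hlampos _ (by omega)).le (hlam_one_le _ (by omega))
  have hzero := hE.re_inner_starProjection_eq_zero_of_nonneg hEdense.ge hwv hnonneg
  have hcomp : ∀ k, k ≠ 1 → (E k).starProjection v = 0 := by
    rintro (_ | _ | k) hk
    · exact hcompat0
    · exact absurd rfl hk
    · refine eq_zero_of_re_inner_sub_smul_eq_zero (hcompat _ (by omega)) (hlampos _ (by omega))
        (hlammono 1 (k + 2) le_rfl (by omega)) ?_
      have h := hzero (k + 2)
      rwa [map_sub, map_smul] at h
  exact ⟨hcomp, hE.mem_of_starProjection_eq_zero hEdense.ge hcomp⟩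

/-- Abstract form of the equality-case argument in the proof of
Theorem 1.2/Theorem 4.2 of Li–Lin–Son: if `(u, v)` is a compatible pair with `v ≠ 0`
and `‖v‖² = lam 1 ⬝ Re⟪u, v⟫`, then `P k v = 0` for every `k ≠ 1` and `v ∈ E 1`,
i.e. `v` is an eigenvector for the lowest positive eigenvalue `lam 1`. -/
theorem compatible_pair_equality_case_first_eigenspace
    {H : Type*} [NormedAddCommGroup H] [InnerProductSpace ℂ H] [CompleteSpace H]
    (E : ℕ → Submodule ℂ H)
    (hEclosed : ∀ k, IsClosed (E k : Set H))
    (hEorth : ∀ j k, j ≠ k → ∀ x ∈ E j, ∀ y ∈ E k, (inner ℂ x y : ℂ) = 0)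
    (hEdense : (⨆ k, E k : Submodule ℂ H).topologicalClosure = ⊤)
    (P : ℕ → H →L[ℂ] H)
    (hPmem : ∀ k x, P k x ∈ E k)
    (hPorth : ∀ k x, x - P k x ∈ (E k)ᗮ)
    (lam : ℕ → ℝ)
    (hlampos : ∀ k, 1 ≤ k → 0 < lam k)
    (hlammono : ∀ j k, 1 ≤ j → j < k → lam j < lam k)
    (hlamtop : Filter.Tendsto lam Filter.atTop Filter.atTop)
    (u v : H)
    (hcompat0 : P 0 v = 0)
    (hcompat : ∀ k, 1 ≤ k → P k v = ((lam k : ℂ)) • P k u)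
    (hv : v ≠ 0)
    (heq : ‖v‖^2 = lam 1 * (inner ℂ u v : ℂ).re) :
    (∀ k, k ≠ 1 → P k v = 0) ∧ v ∈ E 1 :=
  compatible_pair_equality_case_first_eigenspace_general E hEclosed hEorth hEdense P hPmem hPorth
    lam hlampos hlammono u v hcompat0 hcompat heq
end
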